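/- Move commutes with moves relabeled through it: for pairwise distinct indices i, j, k, applying Move[i, j] then Move[i, k] to a document equals applying Move[j, k] then Move[i, j]. -/

import Mathlib

/-- Atomic types of document components. -/
inductive Ty where
  | num | str | bool | del
deriving DecidableEq, Repr

/-- A document is a tuple (list) of atomic types. -/
abbrev Doc := List Ty

/-- Edit operations (1-based indices). `ins i t p` inserts type `t` at index `i`
    (with unique identifier `p`), shifting indices ≥ i right; `conv i t` sets the
    type at index `i` to `t`; `move i j` sets index `i` to the type at index `j`
    and sets index `j` to the tombstone `del`. -/
inductive Edit where
  | id
  | ins (i : ℕ) (t : Ty) (p : ℕ)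
  | conv (i : ℕ) (t : Ty)
  | move (i j : ℕ)
deriving DecidableEq, Repr

/-- Partial action of an edit on a document (1-based indices). -/
def Edit.apply : Edit → Doc → Option Doc
  | .id, d => some d
  | .ins i t _, d =>
      if 1 ≤ i ∧ i ≤ d.length + 1 then
        some (d.take (i-1) ++ t :: d.drop (i-1))
      else none
  | .conv i t, d =>
      if 1 ≤ i ∧ i ≤ d.length then some (d.set (i-1) t) else none
  | .move i j, d =>
      if 1 ≤ i ∧ i ≤ d.length ∧ 1 ≤ j ∧ j ≤ d.length ∧ i ≠ j then
        some ((d.set (i-1) (d.getD (j-1) .del)).set (j-1) .del)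
      else none

/-! Both orders copy the entry at `k` to `i` and leave tombstones at `j` and `k`. In the second
order that entry travels through `j`, so `j` must be in range. -/

/-- `Edit.move` on lists, with 0-based indices and tombstone `x`. -/
def List.moveAt {α : Type*} (x : α) (i j : ℕ) (l : List α) : List α :=
  (l.set i (l.getD j x)).set j x

@[simp]
theorem List.length_moveAt {α : Type*} (x : α) (i j : ℕ) (l : List α) :
    (l.moveAt x i j).length = l.length := by
  simp [List.moveAt]

theorem List.moveAt_moveAt_relabel {α : Type*} (x : α) (l : List α) {i j k : ℕ}
    (hij : i ≠ j) (hik : i ≠ k) (hjk : j ≠ k) (hj : j < l.length) :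
    (l.moveAt x i j).moveAt x i k = (l.moveAt x j k).moveAt x i j := by
  apply List.ext_getElem?
  intro n
  simp only [List.moveAt, List.getD_eq_getElem?_getD, List.getElem?_set, List.length_set]
  split_ifs <;> simp_all

theorem Edit.move_apply_eq_some {i j : ℕ} {d r : Doc} :
    (Edit.move i j).apply d = some r ↔
      (1 ≤ i ∧ i ≤ d.length ∧ 1 ≤ j ∧ j ≤ d.length ∧ i ≠ j) ∧
        d.moveAt .del (i - 1) (j - 1) = r := by
  simp [Edit.apply, List.moveAt]

theorem move_move_relabel_general (i j k : ℕ)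
    (d r₁ r₂ : Doc)
    (h₁ : ((Edit.move i j).apply d >>= (Edit.move i k).apply) = some r₁)
    (h₂ : ((Edit.move j k).apply d >>= (Edit.move i j).apply) = some r₂) :
    r₁ = r₂ := by
  obtain ⟨d₁, hd₁, h₁⟩ := Option.bind_eq_some_iff.mp h₁
  obtain ⟨d₂, hd₂, h₂⟩ := Option.bind_eq_some_iff.mp h₂
  rw [Edit.move_apply_eq_some] at hd₁ hd₂ h₁ h₂
  obtain ⟨⟨hi, -, hj, hjd, hij⟩, rfl⟩ := hd₁
  obtain ⟨⟨-, -, hk, -, hjk⟩, rfl⟩ := hd₂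
  obtain ⟨⟨-, -, -, -, hik⟩, rfl⟩ := h₁
  obtain ⟨-, rfl⟩ := h₂
  exact List.moveAt_moveAt_relabel _ d (by omega) (by omega) (by omega) (by omega)

/-- for pairwise distinct `i, j, k`, applying `Move[i,j]` then
`Move[i,k]` equals applying `Move[j,k]` then `Move[i,j]`. -/
theorem move_move_relabel (i j k : ℕ) (hij : i ≠ j) (hik : i ≠ k) (hjk : j ≠ k)
    (d r₁ r₂ : Doc)
    (h₁ : ((Edit.move i j).apply d >>= (Edit.move i k).apply) = some r₁)
    (h₂ : ((Edit.move j k).apply d >>= (Edit.move i j).apply) = some r₂) :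
    r₁ = r₂ :=
  move_move_relabel_general i j k d r₁ r₂ h₁ h₂
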